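/- Let R be a non-singular m×m matrix over k(x) with det R = c·α/β where c ∈ k∖{0} and α, β ∈ k[x] are monic coprime polynomials. Then β·φ_m(R^{-1}) = α·φ_m(R), where φ_m denotes the m-th determinantal denominator. -/

import Mathlib

/-!
Jacobi's complementary minor identity: if `A * B = 1`, then `det A` times an `i × i` minor of
`B` is `±` an `(m - i) × (m - i)` minor of `A`. Hence every minor of `R⁻¹` has the form
`± N / det R = ± N β / (c α)` with `N` a minor of `R`, whose denominator divides
`φ := φ_m(R)`. As `β` divides the denominator of `det R`, write `φ = β φ₀`; then `N β` has
denominator dividing `φ₀`, so the minor has denominator dividing `α φ₀`, and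
`β φ_m(R⁻¹) ∣ α φ_m(R)`. The same argument for `R⁻¹`, whose determinant is `c⁻¹ β / α`, gives
the reverse divisibility, and both sides are monic.
-/

open Polynomial

noncomputable section

/-- Normalization on a field: every nonzero element normalizes to `1`. -/
noncomputable def fieldNormalizationMonoid (K : Type*) [Field K] : NormalizationMonoid K := by
  classical
  exact
  { normUnit := fun a => if h : a = 0 then 1 else (Units.mk0 a h)⁻¹
    normUnit_zero := dif_pos rfl
    normUnit_one := by
      rw [dif_neg one_ne_zero]
      exact Units.ext (by simp)
    normUnit_mul_units := fun {a} u ha => by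
      rw [dif_neg (mul_ne_zero ha u.ne_zero), dif_neg ha]
      exact Units.ext (by simp [mul_comm]) }

attribute [local instance] fieldNormalizationMonoid

noncomputable local instance (K : Type*) [Field K] : NormalizedGCDMonoid (Polynomial K) :=
  UniqueFactorizationMonoid.toNormalizedGCDMonoid _

variable {k : Type*} [Field k] [CharZero k]

/-- The ℓ-th determinantal denominator of a rational matrix: the monic least common
denominator of all minors of size at most ℓ. -/
def detDen {n p : ℕ} (R : Matrix (Fin n) (Fin p) (RatFunc k)) (ℓ : ℕ) : Polynomial k :=
  (Finset.range (ℓ + 1)).lcm fun i =>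
    (Finset.univ : Finset ((Fin i ↪ Fin n) × (Fin i ↪ Fin p))).lcm fun fg =>
      (Matrix.det fun a b => R (fg.1 a) (fg.2 b)).denom

open Matrix in
theorem Matrix.det_mul_det_toBlocks₁₁_of_mul_eq_one {m n R : Type*} [Fintype m] [Fintype n]
    [DecidableEq m] [DecidableEq n] [CommRing R] {A B : Matrix (m ⊕ n) (m ⊕ n) R}
    (h : A * B = 1) : A.det * B.toBlocks₁₁.det = A.toBlocks₂₂.det := by
  rw [← fromBlocks_toBlocks A, ← fromBlocks_toBlocks B, fromBlocks_multiply, ← fromBlocks_one,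
    fromBlocks_inj] at h
  obtain ⟨h₁₁, -, h₂₁, -⟩ := h
  calc A.det * B.toBlocks₁₁.det = (A * fromBlocks B.toBlocks₁₁ 0 B.toBlocks₂₁ 1).det := by
        rw [det_mul, det_fromBlocks_zero₁₂, det_one, mul_one]
    _ = (fromBlocks 1 A.toBlocks₁₂ 0 A.toBlocks₂₂).det := by
        conv_lhs => rw [← fromBlocks_toBlocks A]
        rw [fromBlocks_multiply, h₁₁, h₂₁]
        simp
    _ = A.toBlocks₂₂.det := by rw [det_fromBlocks_zero₂₁, det_one, one_mul]

theorem Function.Embedding.exists_sumEquiv_apply_inl {i m : ℕ} (f : Fin i ↪ Fin m) :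
    ∃ e : Fin i ⊕ Fin (m - i) ≃ Fin m, ∀ p, e (.inl p) = f p := by
  classical
  have hcard : Fintype.card ↥(Set.range f)ᶜ = m - i := by
    rw [Fintype.card_compl_set, Set.card_range_of_injective f.injective]
    simp
  exact ⟨(Equiv.sumCongr (Equiv.ofInjective f f.injective)
    (Fintype.equivFinOfCardEq hcard).symm).trans (Equiv.Set.sumCompl _), fun p => rfl⟩

open Matrix in
theorem Matrix.exists_det_mul_det_submatrix_eq_of_mul_eq_one {R : Type*} [CommRing R] {m i : ℕ}
    {A B : Matrix (Fin m) (Fin m) R} (hAB : A * B = 1) (f g : Fin i ↪ Fin m) :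
    ∃ (f' g' : Fin (m - i) ↪ Fin m) (s : ℤˣ),
      A.det * (B.submatrix f g).det = s • (A.submatrix f' g').det := by
  obtain ⟨eF, hF⟩ := f.exists_sumEquiv_apply_inl
  obtain ⟨eG, hG⟩ := g.exists_sumEquiv_apply_inl
  have hAB' : A.submatrix eG eF * B.submatrix eF eG = 1 := by
    rw [submatrix_mul_equiv, hAB, submatrix_one_equiv]
  have hB : (B.submatrix eF eG).toBlocks₁₁ = B.submatrix f g := by
    ext p q
    simp [toBlocks₁₁, hF, hG]
  set σ : Equiv.Perm (Fin i ⊕ Fin (m - i)) := eG.trans eF.symm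
  have hA : (A.submatrix eG eF).det = Equiv.Perm.sign σ • A.det := by
    have : A.submatrix eG eF = (A.submatrix eF eF).submatrix σ id := by
      ext p q
      simp [σ]
    rw [this, det_permute, det_submatrix_equiv_self, Units.smul_def, zsmul_eq_mul]
  refine ⟨Function.Embedding.inr.trans eG.toEmbedding, Function.Embedding.inr.trans eF.toEmbedding,
    Equiv.Perm.sign σ, ?_⟩
  have hblock := det_mul_det_toBlocks₁₁_of_mul_eq_one hAB'
  rw [hA, hB, smul_mul_assoc] at hblock
  change _ = _ • (A.submatrix eG eF).toBlocks₂₂.det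
  rw [← hblock, smul_smul, Int.units_mul_self, one_smul]

section DeterminantalDenominator

variable {K : Type*} [Field K] {n p : ℕ}

theorem detDen_dvd_iff {R : Matrix (Fin n) (Fin p) (RatFunc K)} {ℓ : ℕ} {q : K[X]} :
    detDen R ℓ ∣ q ↔
      ∀ i ≤ ℓ, ∀ (f : Fin i ↪ Fin n) (g : Fin i ↪ Fin p), (R.submatrix f g).det.denom ∣ q := by
  simp only [detDen, Finset.lcm_dvd_iff, Finset.mem_range, Nat.lt_succ_iff, Finset.mem_univ,
    true_implies, Prod.forall]
  rfl

theorem denom_det_submatrix_dvd_detDen (R : Matrix (Fin n) (Fin p) (RatFunc K)) {ℓ i : ℕ}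
    (hi : i ≤ ℓ) (f : Fin i ↪ Fin n) (g : Fin i ↪ Fin p) :
    (R.submatrix f g).det.denom ∣ detDen R ℓ :=
  detDen_dvd_iff.1 dvd_rfl i hi f g

theorem detDen_monic (R : Matrix (Fin n) (Fin p) (RatFunc K)) (ℓ : ℕ) : (detDen R ℓ).Monic := by
  classical
  have hne : detDen R ℓ ≠ 0 := by
    simp [detDen, Finset.lcm_eq_zero_iff, RatFunc.denom_ne_zero]
  convert Polynomial.monic_normalize hne using 2
  exact Finset.normalize_lcm.symm

end DeterminantalDenominator

theorem RatFunc.dvd_denom_of_eq_div {K : Type*} [Field K] {x : RatFunc K} {p q : K[X]}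
    (hq : q ≠ 0) (hpq : IsCoprime p q) (hx : x = algebraMap _ _ p / algebraMap _ _ q) :
    q ∣ x.denom :=
  hpq.symm.dvd_of_dvd_mul_left
    ⟨x.num, by rw [mul_comm q, (RatFunc.num_mul_eq_mul_denom_iff hq).2 hx, mul_comm]⟩

section InverseMinors

variable {K : Type*} [Field K] {m : ℕ} {R : Matrix (Fin m) (Fin m) (RatFunc K)} {c : K}
  {α β : K[X]}

theorem denom_det_submatrix_inv_dvd (hc : c ≠ 0) (hα : α ≠ 0) {φ₀ : K[X]}
    (hφ : detDen R m = β * φ₀)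
    (hdet : R.det = RatFunc.C c * (algebraMap K[X] (RatFunc K) α / algebraMap _ _ β))
    {i : ℕ} (f g : Fin i ↪ Fin m) :
    (R⁻¹.submatrix f g).det.denom ∣ α * φ₀ := by
  have hβφ₀ : β * φ₀ ≠ 0 := hφ ▸ (detDen_monic R m).ne_zero
  have hR : R.det ≠ 0 := by
    rw [hdet]
    simp [hc, hα, left_ne_zero_of_mul hβφ₀]
  obtain ⟨f', g', s, hs⟩ :=
    Matrix.exists_det_mul_det_submatrix_eq_of_mul_eq_one (Matrix.mul_nonsing_inv R hR.isUnit) f g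
  obtain ⟨a, ha⟩ := (RatFunc.denom_dvd hβφ₀).1
    (hφ ▸ denom_det_submatrix_dvd_detDen R (Nat.sub_le m i) f' g')
  rw [RatFunc.denom_dvd (mul_ne_zero hα (right_ne_zero_of_mul hβφ₀))]
  refine ⟨(s : ℤ) * Polynomial.C c⁻¹ * a, ?_⟩
  have hM : (R⁻¹.submatrix f g).det = s • (R.submatrix f' g').det / R.det :=
    eq_div_of_mul_eq hR (by rw [mul_comm, hs])
  have hβ : algebraMap K[X] (RatFunc K) β ≠ 0 :=
    RatFunc.algebraMap_ne_zero (left_ne_zero_of_mul hβφ₀)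
  rw [hM, ha, hdet]
  simp only [map_mul, map_intCast, RatFunc.algebraMap_C, map_inv₀, Units.smul_def, zsmul_eq_mul]
  field_simp

theorem mul_detDen_inv_dvd (hc : c ≠ 0) (hα : α ≠ 0) (hβ : β ≠ 0) (hαβ : IsCoprime α β)
    (hdet : R.det = RatFunc.C c * (algebraMap K[X] (RatFunc K) α / algebraMap _ _ β)) :
    β * detDen R⁻¹ m ∣ α * detDen R m := by
  have hβ_dvd : β ∣ R.det.denom := by
    refine RatFunc.dvd_denom_of_eq_div hβ
      ((isCoprime_mul_unit_left_left (Polynomial.isUnit_C.2 hc.isUnit) α β).2 hαβ) ?_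
    rw [hdet, map_mul, RatFunc.algebraMap_C, mul_div_assoc]
  obtain ⟨φ₀, hφ⟩ := hβ_dvd.trans (denom_det_submatrix_dvd_detDen R le_rfl (.refl _) (.refl _))
  rw [hφ, mul_left_comm]
  exact mul_dvd_mul_left β
    (detDen_dvd_iff.2 fun _ _ f g => denom_det_submatrix_inv_dvd hc hα hφ hdet f g)

end InverseMinors

theorem detDen_inv_general {m : ℕ} (R : Matrix (Fin m) (Fin m) (RatFunc k))
    (c : k) (hc : c ≠ 0) (α β : Polynomial k)
    (hα : α.Monic) (hβ : β.Monic) (hαβ : IsCoprime α β)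
    (hdet : R.det = RatFunc.C c * (algebraMap (Polynomial k) (RatFunc k) α /
      algebraMap (Polynomial k) (RatFunc k) β)) :
    β * detDen R⁻¹ m = α * detDen R m := by
  have hR : IsUnit R.det := by
    rw [isUnit_iff_ne_zero, hdet]
    simp [hc, hα.ne_zero, hβ.ne_zero]
  have hdet_inv : R⁻¹.det = RatFunc.C c⁻¹ * (algebraMap (Polynomial k) (RatFunc k) β /
      algebraMap (Polynomial k) (RatFunc k) α) := by
    rw [Matrix.det_nonsing_inv, Ring.inverse_eq_inv', hdet, mul_inv, inv_div, map_inv₀]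
  have h₁ := mul_detDen_inv_dvd hc hα.ne_zero hβ.ne_zero hαβ hdet
  have h₂ := mul_detDen_inv_dvd (inv_ne_zero hc) hβ.ne_zero hα.ne_zero hαβ.symm hdet_inv
  rw [Matrix.nonsing_inv_nonsing_inv R hR] at h₂
  exact Polynomial.eq_of_monic_of_associated (hβ.mul (detDen_monic _ _))
    (hα.mul (detDen_monic _ _)) (associated_of_dvd_dvd h₁ h₂)

/-- If `R` is a nonsingular `m × m` rational matrix with
`det R = c * α / β` for `c ∈ k \ {0}` and `α, β` monic coprime polynomials, then
`β * φ_m(R⁻¹) = α * φ_m(R)`. -/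
theorem detDen_inv {m : ℕ} (R : Matrix (Fin m) (Fin m) (RatFunc k))
    (hR : R.det ≠ 0) (c : k) (hc : c ≠ 0) (α β : Polynomial k)
    (hα : α.Monic) (hβ : β.Monic) (hαβ : IsCoprime α β)
    (hdet : R.det = RatFunc.C c * (algebraMap (Polynomial k) (RatFunc k) α /
      algebraMap (Polynomial k) (RatFunc k) β)) :
    β * detDen R⁻¹ m = α * detDen R m :=
  detDen_inv_general R c hc α β hα hβ hαβ hdet
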